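/- Let F: [0,T] → M_n(ℝ) be continuous symmetric-matrix valued and H₀ a complex symmetric matrix with Im(H₀) positive definite. Then the matrix Riccati equation Ḣ(t) + H(t)² = F(t), H(0) = H₀, has a (unique) solution H: [0,T] → M_n(ℂ) defined on all of [0,T], given by H(t) = Z(t) Y(t)^{-1} where Ż = FY, Ẏ = Z, Z(0) = H₀, Y(0) = I. -/

import Mathlib

/-!
The Wronskian `Yᴴ Z - Zᴴ Y` of the linear system `Ẏ = Z`, `Ż = F Y` is conserved because `F` is
Hermitian. At `t = 0` it equals `H₀ - H₀ᴴ = 2i Im H₀`, whose quadratic form `v ↦ vᴴ (2i Im H₀) v`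
vanishes only at `v = 0`; since `vᴴ W v = 0` whenever `Y v = 0`, each `Y t` is invertible. Then
`H = Z Y⁻¹` solves the Riccati equation by the product rule and `(Y⁻¹)' = -Y⁻¹ Ẏ Y⁻¹`.
-/

open Matrix Filter Topology

attribute [local instance] Matrix.normedAddCommGroup Matrix.normedSpace

-- The matrix norm in force is the entrywise sup norm, which is not submultiplicative, so the
-- `NormedRing` calculus lemmas do not apply; the derivatives are computed from slopes instead.
section Calculus

variable {𝕜 : Type*} [NontriviallyNormedField 𝕜] {t : 𝕜}

theorem HasDerivAt.matrix_mul {R : Type*} [NormedRing R] [NormedAlgebra 𝕜 R]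
    {l m n : Type*} [Fintype l] [Fintype m] [Fintype n]
    {f : 𝕜 → Matrix l m R} {g : 𝕜 → Matrix m n R} {f' : Matrix l m R} {g' : Matrix m n R}
    (hf : HasDerivAt f f' t) (hg : HasDerivAt g g' t) :
    HasDerivAt (fun s => f s * g s) (f' * g t + f t * g') t := by
  have hg_cont : Tendsto g (𝓝[≠] t) (𝓝 (g t)) :=
    hg.continuousAt.tendsto.mono_left nhdsWithin_le_nhds
  have hmul : Continuous fun p : Matrix l m R × Matrix m n R => p.1 * p.2 :=
    continuous_fst.matrix_mul continuous_snd
  refine hasDerivAt_iff_tendsto_slope.2 ((((hmul.tendsto _).comp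
    ((hasDerivAt_iff_tendsto_slope.1 hf).prodMk_nhds hg_cont)).add
    ((hmul.tendsto _).comp (tendsto_const_nhds.prodMk_nhds
      (hasDerivAt_iff_tendsto_slope.1 hg)))).congr fun s => ?_)
  simp only [Function.comp_apply, slope_def_module, Matrix.smul_mul, Matrix.mul_smul, ← smul_add,
    Matrix.sub_mul, Matrix.mul_sub]
  congr 1
  abel

theorem HasDerivAt.matrix_inv {K : Type*} [NormedField K] [NormedAlgebra 𝕜 K]
    {m : Type*} [Fintype m] [DecidableEq m] {f : 𝕜 → Matrix m m K} {f' : Matrix m m K}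
    (hf : HasDerivAt f f' t) (hdet : (f t).det ≠ 0) :
    HasDerivAt (fun s => (f s)⁻¹) (-((f t)⁻¹ * f' * (f t)⁻¹)) t := by
  have hinv : ContinuousAt (fun s => (f s)⁻¹) t := by
    refine (continuousAt_matrix_inv _ ?_).comp hf.continuousAt
    simpa [Ring.inverse_eq_inv'] using continuousAt_inv₀ hdet
  have hdet_ev : ∀ᶠ s in 𝓝[≠] t, (f s).det ≠ 0 :=
    ((continuous_id.matrix_det.continuousAt.comp hf.continuousAt).eventually_ne hdet).filter_mono
      nhdsWithin_le_nhds
  refine hasDerivAt_iff_tendsto_slope.2 ((((hinv.tendsto.mono_left nhdsWithin_le_nhds).mul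
    (hasDerivAt_iff_tendsto_slope.1 hf)).mul_const _).neg.congr' ?_)
  filter_upwards [hdet_ev] with s hs
  have hinv_sub : (f s)⁻¹ - (f t)⁻¹ = -((f s)⁻¹ * (f s - f t) * (f t)⁻¹) := by
    rw [mul_sub, sub_mul, nonsing_inv_mul _ (Ne.isUnit hs), Matrix.mul_assoc,
      mul_nonsing_inv _ (Ne.isUnit hdet)]
    simp
  simp only [slope_def_module, hinv_sub, smul_neg, mul_smul_comm, smul_mul_assoc]

end Calculus

theorem hasDerivAt_mul_inv_of_linear_system {𝕜 : Type*} [NontriviallyNormedField 𝕜] {t : 𝕜}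
    {K : Type*} [NormedField K] [NormedAlgebra 𝕜 K] {m : Type*} [Fintype m] [DecidableEq m]
    {Y Z : 𝕜 → Matrix m m K} {A : Matrix m m K}
    (hY : HasDerivAt Y (Z t) t) (hZ : HasDerivAt Z (A * Y t) t) (hdet : (Y t).det ≠ 0) :
    HasDerivAt (fun s => Z s * (Y s)⁻¹) (A - Z t * (Y t)⁻¹ * (Z t * (Y t)⁻¹)) t := by
  refine (hZ.matrix_mul (hY.matrix_inv hdet)).congr_deriv ?_
  rw [Matrix.mul_assoc A, mul_nonsing_inv _ (Ne.isUnit hdet), Matrix.mul_one, Matrix.mul_neg,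
    sub_eq_add_neg]
  simp only [Matrix.mul_assoc]

section Wronskian

variable {K : Type*} [RCLike K] {m : Type*} [Fintype m]

def wronskian (Y Z : Matrix m m K) : Matrix m m K := Yᴴ * Z - Zᴴ * Y

theorem wronskian_one_left [DecidableEq m] (H : Matrix m m K) : wronskian 1 H = H - Hᴴ := by
  simp [wronskian]

theorem hasDerivAt_wronskian {Y Z : ℝ → Matrix m m K} {A : Matrix m m K} {t : ℝ}
    (hA : A.IsHermitian) (hY : HasDerivAt Y (Z t) t) (hZ : HasDerivAt Z (A * Y t) t) :
    HasDerivAt (fun s => wronskian (Y s) (Z s)) 0 t := by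
  refine ((hY.star.matrix_mul hZ).sub (hZ.star.matrix_mul hY)).congr_deriv ?_
  simp only [star_eq_conjTranspose, conjTranspose_mul, hA.eq, Matrix.mul_assoc]
  abel

theorem star_dotProduct_wronskian_mulVec_eq_zero {Y Z : Matrix m m K} {v : m → K}
    (hv : Y *ᵥ v = 0) : star v ⬝ᵥ (wronskian Y Z *ᵥ v) = 0 := by
  rw [wronskian, sub_mulVec, ← mulVec_mulVec, ← mulVec_mulVec, hv, mulVec_zero, sub_zero,
    dotProduct_mulVec, ← star_mulVec, hv, star_zero, zero_dotProduct]

theorem det_ne_zero_of_wronskian [DecidableEq m] {Y Z : Matrix m m K}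
    (h : ∀ v, v ≠ 0 → star v ⬝ᵥ (wronskian Y Z *ᵥ v) ≠ 0) : Y.det ≠ 0 := fun hdet =>
  let ⟨v, hv, hYv⟩ := exists_mulVec_eq_zero_iff.mpr hdet
  h v hv (star_dotProduct_wronskian_mulVec_eq_zero hYv)

end Wronskian

theorem Matrix.sub_conjTranspose_eq_smul_map_im {m : Type*} {H : Matrix m m ℂ} (hH : Hᵀ = H) :
    H - Hᴴ = (2 * Complex.I) • (H.map Complex.im).map ((↑) : ℝ → ℂ) := by
  ext i j
  have hij : H j i = H i j := congrFun (congrFun hH i) j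
  simp only [sub_apply, conjTranspose_apply, hij, smul_apply, map_apply, smul_eq_mul,
    RCLike.star_def, Complex.sub_conj]
  push_cast
  ring

theorem Matrix.PosDef.re_star_dotProduct_map_ofReal_mulVec_pos {m : Type*} [Fintype m]
    {M : Matrix m m ℝ} (hM : M.PosDef) {v : m → ℂ} (hv : v ≠ 0) :
    0 < (star v ⬝ᵥ (M.map ((↑) : ℝ → ℂ) *ᵥ v)).re := by
  set a : m → ℝ := fun i => (v i).re
  set b : m → ℝ := fun i => (v i).im
  have hre : (star v ⬝ᵥ (M.map ((↑) : ℝ → ℂ) *ᵥ v)).re = a ⬝ᵥ M *ᵥ a + b ⬝ᵥ M *ᵥ b := by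
    simp only [dotProduct, mulVec, map_apply, Pi.star_apply, Finset.mul_sum, Complex.re_sum,
      ← Finset.sum_add_distrib]
    refine Finset.sum_congr rfl fun i _ => Finset.sum_congr rfl fun j _ => ?_
    simp only [Complex.mul_re, Complex.mul_im, Complex.ofReal_re, Complex.ofReal_im,
      RCLike.star_def, Complex.conj_re, Complex.conj_im, a, b]
    ring
  have ha := hM.posSemidef.dotProduct_mulVec_nonneg a
  have hb := hM.posSemidef.dotProduct_mulVec_nonneg b
  simp only [star_trivial] at ha hb
  rw [hre]
  by_cases ha0 : a = 0
  · have hb0 : b ≠ 0 := fun hb0 => hv (funext fun i =>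
      Complex.ext (congrFun ha0 i) (congrFun hb0 i))
    simpa using add_pos_of_nonneg_of_pos ha (hM.dotProduct_mulVec_pos hb0)
  · simpa using add_pos_of_pos_of_nonneg (hM.dotProduct_mulVec_pos ha0) hb

theorem Matrix.star_dotProduct_sub_conjTranspose_mulVec_ne_zero {m : Type*} [Fintype m]
    {H : Matrix m m ℂ} (hH : Hᵀ = H) (him : (H.map Complex.im).PosDef) {v : m → ℂ}
    (hv : v ≠ 0) : star v ⬝ᵥ ((H - Hᴴ) *ᵥ v) ≠ 0 := by
  rw [sub_conjTranspose_eq_smul_map_im hH, smul_mulVec, dotProduct_smul, smul_eq_mul]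
  exact mul_ne_zero (by simp) fun h0 =>
    (him.re_star_dotProduct_map_ofReal_mulVec_pos hv).ne' (by rw [h0, Complex.zero_re])

theorem matrix_riccati_global_solution_general {n : ℕ} {T : ℝ}
    (F : ℝ → Matrix (Fin n) (Fin n) ℝ)
    (hFsym : ∀ t ∈ Set.Icc (0:ℝ) T, (F t)ᵀ = F t)
    (H₀ : Matrix (Fin n) (Fin n) ℂ)
    (hH₀sym : H₀ᵀ = H₀)
    (hH₀im : (H₀.map Complex.im).PosDef)
    (Z Y : ℝ → Matrix (Fin n) (Fin n) ℂ)
    (hZ : ∀ t ∈ Set.Icc (0:ℝ) T, HasDerivAt Z ((F t).map (fun x : ℝ => (x : ℂ)) * Y t) t)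
    (hY : ∀ t ∈ Set.Icc (0:ℝ) T, HasDerivAt Y (Z t) t)
    (hZ0 : Z 0 = H₀) (hY0 : Y 0 = 1) :
    ∃ H : ℝ → Matrix (Fin n) (Fin n) ℂ, H 0 = H₀ ∧
      ∀ t ∈ Set.Icc (0:ℝ) T,
        H t = Z t * (Y t)⁻¹ ∧
        HasDerivWithinAt H ((F t).map (fun x : ℝ => (x : ℂ)) - H t * H t)
          (Set.Icc 0 T) t := by
  have hF : ∀ t ∈ Set.Icc (0:ℝ) T, ((F t).map (fun x : ℝ => (x : ℂ))).IsHermitian :=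
    fun t ht => IsHermitian.map ((conjTranspose_eq_transpose_of_trivial _).trans (hFsym t ht)) _
      fun x => (Complex.conj_ofReal x).symm
  have hW_deriv : ∀ t ∈ Set.Icc (0:ℝ) T, HasDerivAt (fun s => wronskian (Y s) (Z s)) 0 t :=
    fun t ht => hasDerivAt_wronskian (hF t ht) (hY t ht) (hZ t ht)
  have hW : ∀ t ∈ Set.Icc (0:ℝ) T, wronskian (Y t) (Z t) = H₀ - H₀ᴴ := fun t ht => by
    rw [constant_of_has_deriv_right_zero (fun s hs => (hW_deriv s hs).continuousAt.continuousWithinAt)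
      (fun s hs => (hW_deriv s (Set.Ico_subset_Icc_self hs)).hasDerivWithinAt) t ht, hY0, hZ0,
      wronskian_one_left]
  have hdet : ∀ t ∈ Set.Icc (0:ℝ) T, (Y t).det ≠ 0 := fun t ht =>
    det_ne_zero_of_wronskian fun v hv => by
      rw [hW t ht]
      exact star_dotProduct_sub_conjTranspose_mulVec_ne_zero hH₀sym hH₀im hv
  refine ⟨fun s => Z s * (Y s)⁻¹, by simp [hZ0, hY0], fun t ht => ⟨rfl, ?_⟩⟩
  exact (hasDerivAt_mul_inv_of_linear_system (hY t ht) (hZ t ht) (hdet t ht)).hasDerivWithinAt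

/-- Global solvability of the matrix Riccati equation `Ḣ + H² = F`, `H(0) = H₀` on
`[0,T]`, when `F` is continuous, real and symmetric and `H₀` is complex symmetric with
positive definite imaginary part: the solution exists on all of `[0,T]` and is given by
`H(t) = Z(t) Y(t)⁻¹`, where `Ż = FY`, `Ẏ = Z`, `Z(0) = H₀`, `Y(0) = I`. -/
theorem matrix_riccati_global_solution {n : ℕ} {T : ℝ} (hT : 0 ≤ T)
    (F : ℝ → Matrix (Fin n) (Fin n) ℝ)
    (hFc : ContinuousOn F (Set.Icc 0 T))
    (hFsym : ∀ t ∈ Set.Icc (0:ℝ) T, (F t)ᵀ = F t)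
    (H₀ : Matrix (Fin n) (Fin n) ℂ)
    (hH₀sym : H₀ᵀ = H₀)
    (hH₀im : (H₀.map Complex.im).PosDef)
    (Z Y : ℝ → Matrix (Fin n) (Fin n) ℂ)
    (hZ : ∀ t ∈ Set.Icc (0:ℝ) T, HasDerivAt Z ((F t).map (fun x : ℝ => (x : ℂ)) * Y t) t)
    (hY : ∀ t ∈ Set.Icc (0:ℝ) T, HasDerivAt Y (Z t) t)
    (hZ0 : Z 0 = H₀) (hY0 : Y 0 = 1) :
    ∃ H : ℝ → Matrix (Fin n) (Fin n) ℂ, H 0 = H₀ ∧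
      ∀ t ∈ Set.Icc (0:ℝ) T,
        H t = Z t * (Y t)⁻¹ ∧
        HasDerivWithinAt H ((F t).map (fun x : ℝ => (x : ℂ)) - H t * H t)
          (Set.Icc 0 T) t :=
  matrix_riccati_global_solution_general F hFsym H₀ hH₀sym hH₀im Z Y hZ hY hZ0 hY0
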